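/- The sum of the series Σ_{m ≥ 1} φ(m)/(m²(m+1)) lies strictly between 0.7 and 0.9. -/

import Mathlib

/-!
Since `φ m ≤ m`, the `m`-th term is at most `1/(m(m+1)) = 1/m - 1/(m+1)`, so the tail from `N` on
telescopes to at most `1/N`. The partial sum over `m < 8` already exceeds `0.7`, and adding `1/8`
keeps it below `0.9`.
-/

open Finset Filter Topology

theorem hasSum_sub_succ_of_antitone {f : ℕ → ℝ} (hf : Antitone f) (h : Tendsto f atTop (𝓝 0)) :
    HasSum (fun n ↦ f n - f (n + 1)) (f 0) := by
  rw [hasSum_iff_tendsto_nat_of_nonneg fun n ↦ sub_nonneg.2 (hf n.le_succ)]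
  simpa only [sum_range_sub', sub_zero] using tendsto_const_nhds.sub h

theorem hasSum_one_div_add_sub_one_div_add_one {a : ℝ} (ha : 0 < a) :
    HasSum (fun n : ℕ ↦ 1 / (n + a) - 1 / (n + 1 + a)) (1 / a) := by
  have hanti : Antitone fun n : ℕ ↦ 1 / (n + a) := fun m n hmn ↦
    one_div_le_one_div_of_le (by positivity) (by gcongr)
  have hlim : Tendsto (fun n : ℕ ↦ 1 / (n + a)) atTop (𝓝 0) :=
    tendsto_const_nhds.div_atTop (tendsto_atTop_add_const_right _ a tendsto_natCast_atTop_atTop)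
  simpa only [Nat.cast_zero, zero_add, Nat.cast_succ] using hasSum_sub_succ_of_antitone hanti hlim

noncomputable def totientTerm (m : ℕ) : ℝ := (Nat.totient m : ℝ) / (m ^ 2 * (m + 1))

theorem totientTerm_nonneg (m : ℕ) : 0 ≤ totientTerm m := by
  unfold totientTerm; positivity

theorem totientTerm_le_one_div_sub {m : ℕ} (hm : 0 < m) :
    totientTerm m ≤ 1 / (m : ℝ) - 1 / (m + 1) := by
  have hm' : (0 : ℝ) < m := by exact_mod_cast hm
  calc totientTerm m ≤ (m : ℝ) / (m ^ 2 * (m + 1)) := by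
        unfold totientTerm
        gcongr
        exact_mod_cast Nat.totient_le m
    _ = 1 / (m : ℝ) - 1 / (m + 1) := by
        field_simp
        ring

theorem totientTerm_nat_add_le {N : ℕ} (hN : 0 < N) (i : ℕ) :
    totientTerm (i + N) ≤ 1 / (i + (N : ℝ)) - 1 / (i + 1 + (N : ℝ)) :=
  (totientTerm_le_one_div_sub (by omega)).trans_eq (by push_cast; ring)

theorem summable_totientTerm_nat_add {N : ℕ} (hN : 0 < N) :
    Summable fun i ↦ totientTerm (i + N) :=
  (hasSum_one_div_add_sub_one_div_add_one (Nat.cast_pos.2 hN)).summable.of_nonneg_of_le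
    (fun _ ↦ totientTerm_nonneg _) (totientTerm_nat_add_le hN)

theorem summable_totientTerm : Summable totientTerm :=
  (summable_nat_add_iff 1).1 (summable_totientTerm_nat_add one_pos)

theorem tsum_totientTerm_nat_add_le {N : ℕ} (hN : 0 < N) :
    ∑' i, totientTerm (i + N) ≤ 1 / N :=
  hasSum_le (totientTerm_nat_add_le hN) (summable_totientTerm_nat_add hN).hasSum
    (hasSum_one_div_add_sub_one_div_add_one (Nat.cast_pos.2 hN))

theorem sum_range_eight_totientTerm :
    0.7 < ∑ m ∈ range 8, totientTerm m ∧ ∑ m ∈ range 8, totientTerm m + 1 / 8 < 0.9 := by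
  have h3 : Nat.totient 3 = 2 := by decide
  have h4 : Nat.totient 4 = 2 := by decide
  have h5 : Nat.totient 5 = 4 := by decide
  have h6 : Nat.totient 6 = 2 := by decide
  have h7 : Nat.totient 7 = 6 := by decide
  simp only [sum_range_succ, sum_range_zero, totientTerm, Nat.totient_zero, Nat.totient_one,
    Nat.totient_two, h3, h4, h5, h6, h7]
  norm_num

theorem totient_series_between :
    0.7 < ∑' m : ℕ, (Nat.totient m : ℝ) / (m ^ 2 * (m + 1))
      ∧ ∑' m : ℕ, (Nat.totient m : ℝ) / (m ^ 2 * (m + 1)) < 0.9 := by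
  change 0.7 < ∑' m, totientTerm m ∧ ∑' m, totientTerm m < 0.9
  obtain ⟨hlower, hupper⟩ := sum_range_eight_totientTerm
  have hsplit := summable_totientTerm.sum_add_tsum_nat_add 8
  have htail := tsum_totientTerm_nat_add_le (N := 8) (by norm_num)
  have hpartial : ∑ m ∈ range 8, totientTerm m ≤ ∑' m, totientTerm m :=
    summable_totientTerm.sum_le_tsum _ fun m _ ↦ totientTerm_nonneg m
  push_cast at htail
  constructor <;> linarith
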